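/- For every integer M > 3, twice the number of elements of the interior weight set L̃_M equals the number of elements of the interior honeycomb point set H̃_M, i.e. 2·|L̃_M| = |H̃_M|. -/

import Mathlib

open Finset

/-- The point set `F_{P,M}`: triples of nonnegative integers summing to `M`. -/
def FPM (M : ℕ) : Finset (ℕ × ℕ × ℕ) :=
  (Finset.range (M+1) ×ˢ Finset.range (M+1) ×ˢ Finset.range (M+1)).filter
    (fun s => s.1 + s.2.1 + s.2.2 = M)

/-- The point set `F_{Q,M}`: triples of `F_{P,M}` with `s1 + 2 s2 ≡ 0 (mod 3)`. -/
def FQM (M : ℕ) : Finset (ℕ × ℕ × ℕ) :=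
  (FPM M).filter (fun s => (s.2.1 + 2 * s.2.2) % 3 = 0)

/-- The honeycomb point set `H_M = F_{P,M} \ F_{Q,M}`. -/
def HM (M : ℕ) : Finset (ℕ × ℕ × ℕ) := FPM M \ FQM M

/-- The interior point set `F̃_{P,M}`: triples of strictly positive integers summing to `M`. -/
def FPMint (M : ℕ) : Finset (ℕ × ℕ × ℕ) :=
  (FPM M).filter (fun s => 0 < s.1 ∧ 0 < s.2.1 ∧ 0 < s.2.2)

/-- The interior point set `F̃_{Q,M}`. -/
def FQMint (M : ℕ) : Finset (ℕ × ℕ × ℕ) :=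
  (FPMint M).filter (fun s => (s.2.1 + 2 * s.2.2) % 3 = 0)

/-- The interior honeycomb point set `H̃_M = F̃_{P,M} \ F̃_{Q,M}`. -/
def HMint (M : ℕ) : Finset (ℕ × ℕ × ℕ) := FPMint M \ FQMint M

/-- The weight set `L_M ⊆ Λ_{Q,M}`. -/
def LM (M : ℕ) : Finset (ℕ × ℕ × ℕ) :=
  (FPM M).filter (fun l => (l.2.1 < l.1 ∧ l.2.2 < l.1) ∨ (l.1 = l.2.1 ∧ l.2.2 < l.1))

/-- The interior weight set `L̃_M`: elements of `L_M` with all coordinates positive. -/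
def LMint (M : ℕ) : Finset (ℕ × ℕ × ℕ) :=
  (LM M).filter (fun l => 0 < l.1 ∧ 0 < l.2.1 ∧ 0 < l.2.2)

/-- A triple `s ∈ F_{P,M}` is identified with the point `(s1/M, s2/M)`. -/
noncomputable def pt (M : ℕ) (s : ℕ × ℕ × ℕ) : ℝ × ℝ :=
  ((s.2.1 : ℝ) / M, (s.2.2 : ℝ) / M)

/-- The Weyl group orbit of the weight `λ` (ordered list, in `ω`-coordinates). -/
def orbit (l : ℕ × ℕ × ℕ) : List (ℤ × ℤ) :=
  [(2*(l.2.1:ℤ)+l.2.2, (l.2.1:ℤ)+2*l.2.2),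
   (-(l.2.1:ℤ)+l.2.2, (l.2.1:ℤ)+2*l.2.2),
   (-(l.2.1:ℤ)-2*l.2.2, (l.2.1:ℤ)-l.2.2),
   (-(l.2.1:ℤ)-2*l.2.2, -2*(l.2.1:ℤ)-l.2.2),
   (-(l.2.1:ℤ)+l.2.2, -2*(l.2.1:ℤ)-l.2.2),
   (2*(l.2.1:ℤ)+l.2.2, (l.2.1:ℤ)-l.2.2)]

/-- The signs `(+,−,+,−,+,−)` attached to the six orbit points for `S`-functions. -/
def orbitSigns : List ℤ := [1, -1, 1, -1, 1, -1]

/-- The Weyl orbit `C`-function `Φ_λ` of `A₂`. -/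
noncomputable def PhiC (l : ℕ × ℕ × ℕ) (x : ℝ × ℝ) : ℂ :=
  ((orbit l).map (fun p =>
    Complex.exp (2 * Real.pi * Complex.I / 3 * ((p.1 : ℂ) * (x.1 : ℂ) + (p.2 : ℂ) * (x.2 : ℂ))))).sum

/-- The Weyl orbit `S`-function `φ_λ` of `A₂`. -/
noncomputable def PhiS (l : ℕ × ℕ × ℕ) (x : ℝ × ℝ) : ℂ :=
  ((orbitSigns.zip (orbit l)).map (fun p => (p.1 : ℂ) *
    Complex.exp (2 * Real.pi * Complex.I / 3 * ((p.2.1 : ℂ) * (x.1 : ℂ) + (p.2.2 : ℂ) * (x.2 : ℂ))))).sum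

/-- The Hartley kernel `cas t = cos t + sin t`. -/
noncomputable def cas (t : ℝ) : ℝ := Real.cos t + Real.sin t

/-- The Hartley `C`-function `ζ¹_λ` of `A₂`. -/
noncomputable def zetaC (l : ℕ × ℕ × ℕ) (x : ℝ × ℝ) : ℝ :=
  ((orbit l).map (fun p => cas (2 * Real.pi / 3 * ((p.1 : ℝ) * x.1 + (p.2 : ℝ) * x.2)))).sum

/-- The Hartley `S`-function `ζ^e_λ` of `A₂`. -/
noncomputable def zetaS (l : ℕ × ℕ × ℕ) (x : ℝ × ℝ) : ℝ :=
  ((orbitSigns.zip (orbit l)).map (fun p => (p.1 : ℝ) *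
    cas (2 * Real.pi / 3 * ((p.2.1 : ℝ) * x.1 + (p.2.2 : ℝ) * x.2)))).sum

/-- The number of zero entries of a triple. -/
def zeroCount (s : ℕ × ℕ × ℕ) : ℕ :=
  (if s.1 = 0 then 1 else 0) + (if s.2.1 = 0 then 1 else 0) + (if s.2.2 = 0 then 1 else 0)

/-- The discrete function `ε`: values `6, 3, 1` for zero, one, two zero entries. -/
def epsF (s : ℕ × ℕ × ℕ) : ℕ :=
  if zeroCount s = 0 then 6 else if zeroCount s = 1 then 3 else 1

/-- The discrete function `h_M`: values `1, 2, 6` for zero, one, two zero entries. -/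
def hMF (l : ℕ × ℕ × ℕ) : ℕ :=
  if zeroCount l = 0 then 1 else if zeroCount l = 1 then 2 else 6

/-- The elements `γ₀ = id`, `γ₁`, `γ₂` of `Γ_M` acting as cyclic permutations of Kac
coordinates: `γ₁[λ0,λ1,λ2] = [λ2,λ0,λ1]`, `γ₂[λ0,λ1,λ2] = [λ1,λ2,λ0]`. -/
def gam (k : Fin 3) (l : ℕ × ℕ × ℕ) : ℕ × ℕ × ℕ :=
  if k = 0 then l else if k = 1 then (l.2.2, l.1, l.2.1) else (l.2.1, l.2.2, l.1)

/-- The normalization function `μ` of a triple of extension coefficients. -/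
noncomputable def muNorm (a b c : ℂ) : ℝ :=
  ‖a‖ ^ 2 + ‖b‖ ^ 2 + ‖c‖ ^ 2
    - (a * starRingEnd ℂ b + a * starRingEnd ℂ c + b * starRingEnd ℂ c).re

/-- The intertwining function `β` of two triples of extension coefficients. -/
noncomputable def betaFun (a b c a' b' c' : ℂ) : ℂ :=
  2 * (a * starRingEnd ℂ a' + b * starRingEnd ℂ b' + c * starRingEnd ℂ c')
    - a * (starRingEnd ℂ b' + starRingEnd ℂ c')
    - b * (starRingEnd ℂ a' + starRingEnd ℂ c')
    - c * (starRingEnd ℂ a' + starRingEnd ℂ b')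

/-- The extended `C`-function `Φ^t_λ` with extension coefficients `μ0, μ1, μ2`. -/
noncomputable def PhiCExt (μ0 μ1 μ2 : ℂ) (l : ℕ × ℕ × ℕ) (x : ℝ × ℝ) : ℂ :=
  μ0 * PhiC l x + μ1 * PhiC (gam 1 l) x + μ2 * PhiC (gam 2 l) x

/-- The extended `S`-function `φ^t_λ` with extension coefficients `μ0, μ1, μ2`. -/
noncomputable def PhiSExt (μ0 μ1 μ2 : ℂ) (l : ℕ × ℕ × ℕ) (x : ℝ × ℝ) : ℂ :=
  μ0 * PhiS l x + μ1 * PhiS (gam 1 l) x + μ2 * PhiS (gam 2 l) x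

/-- The extended Hartley `C`-function `ζ^{1,t}_λ` with extension coefficients `μ0, μ1, μ2`. -/
noncomputable def zetaCExt (μ0 μ1 μ2 : ℂ) (l : ℕ × ℕ × ℕ) (x : ℝ × ℝ) : ℂ :=
  μ0 * (zetaC l x : ℂ) + μ1 * (zetaC (gam 1 l) x : ℂ) + μ2 * (zetaC (gam 2 l) x : ℂ)

/-- The extended Hartley `S`-function `ζ^{e,t}_λ` with extension coefficients `μ0, μ1, μ2`. -/
noncomputable def zetaSExt (μ0 μ1 μ2 : ℂ) (l : ℕ × ℕ × ℕ) (x : ℝ × ℝ) : ℂ :=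
  μ0 * (zetaS l x : ℂ) + μ1 * (zetaS (gam 1 l) x : ℂ) + μ2 * (zetaS (gam 2 l) x : ℂ)

/-!
Both counts grow by the same amount when `M` increases by `3`. Both defining conditions are
invariant under adding `(1, 1, 1)`, so after removing the rim `min sᵢ = 1` the rest of `L̃_{M+3}`,
`H̃_{M+3}` is `L̃_M`, `H̃_M` shifted. The rim is a closed walk of `3M` lattice points
(`rimPoint`); at its `i`-th step `s₁ + 2 s₂ ≡ 2M + 3 - i (mod 3)`, so `H̃` takes `2M` of them,
while the dominant weights on it form a single arc of `M` consecutive steps. Hence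
`|L̃_{M+3}| = |L̃_M| + M` and `|H̃_{M+3}| = |H̃_M| + 2M`, and the cases `M ≤ 2` are checked directly.
-/

def shift : ℕ × ℕ × ℕ ↪ ℕ × ℕ × ℕ :=
  ⟨fun s => (s.1 + 1, s.2.1 + 1, s.2.2 + 1), fun s t h => by
    simp only [Prod.mk.injEq, add_left_inj] at h
    exact Prod.ext h.1 (Prod.ext h.2.1 h.2.2)⟩

@[simp]
lemma shift_apply (s : ℕ × ℕ × ℕ) : shift s = (s.1 + 1, s.2.1 + 1, s.2.2 + 1) := rfl

def OnRim (s : ℕ × ℕ × ℕ) : Prop := s.1 = 1 ∨ s.2.1 = 1 ∨ s.2.2 = 1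

instance : DecidablePred OnRim := fun _ => inferInstanceAs (Decidable (_ ∨ _ ∨ _))

@[simp]
lemma mem_LMint {M : ℕ} {s : ℕ × ℕ × ℕ} :
    s ∈ LMint M ↔ s.1 + s.2.1 + s.2.2 = M ∧
      ((s.2.1 < s.1 ∧ s.2.2 < s.1) ∨ (s.1 = s.2.1 ∧ s.2.2 < s.1)) ∧
      0 < s.1 ∧ 0 < s.2.1 ∧ 0 < s.2.2 := by
  simp only [LMint, LM, FPM, mem_filter, mem_product, mem_range]
  omega

@[simp]
lemma mem_HMint {M : ℕ} {s : ℕ × ℕ × ℕ} :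
    s ∈ HMint M ↔ s.1 + s.2.1 + s.2.2 = M ∧ (s.2.1 + 2 * s.2.2) % 3 ≠ 0 ∧
      0 < s.1 ∧ 0 < s.2.1 ∧ 0 < s.2.2 := by
  simp only [HMint, FQMint, FPMint, FPM, mem_sdiff, mem_filter, mem_product, mem_range]
  omega

lemma card_filter_mod_three_ne_zero (r n : ℕ) :
    ((range (3 * n)).filter (fun i => (i + r) % 3 ≠ 0)).card = 2 * n := by
  induction n with
  | zero => rfl
  | succ n ih =>
    rw [card_filter] at ih ⊢
    rw [show 3 * (n + 1) = 3 * n + 1 + 1 + 1 by ring, sum_range_succ, sum_range_succ,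
      sum_range_succ, ih]
    split_ifs <;> omega

lemma card_eq_card_add_card_filter_onRim {S T : Finset (ℕ × ℕ × ℕ)}
    (hS : ∀ s ∈ S, 0 < s.1 ∧ 0 < s.2.1 ∧ 0 < s.2.2) (hT : ∀ s ∈ T, 0 < s.1 ∧ 0 < s.2.1 ∧ 0 < s.2.2)
    (hST : ∀ s, 0 < s.1 ∧ 0 < s.2.1 ∧ 0 < s.2.2 → (shift s ∈ S ↔ s ∈ T)) :
    S.card = T.card + (S.filter OnRim).card := by
  have hinner : S.filter (fun s => ¬ OnRim s) = T.map shift := by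
    ext s
    simp only [Finset.mem_filter, mem_map]
    simp only [OnRim]
    constructor
    · rintro ⟨hs, hrim⟩
      obtain ⟨ha, hb, hc⟩ := hS s hs
      have hs' : shift (s.1 - 1, s.2.1 - 1, s.2.2 - 1) = s := by
        ext <;> simp only [shift_apply] <;> omega
      exact ⟨_, (hST _ (by dsimp only; omega)).1 (hs' ▸ hs), hs'⟩
    · rintro ⟨t, ht, rfl⟩
      obtain ⟨ha, hb, hc⟩ := hT t ht
      refine ⟨(hST t ⟨ha, hb, hc⟩).2 ht, ?_⟩
      simp only [shift_apply]
      omega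
  rw [← card_filter_add_card_filter_not (p := OnRim), hinner, card_map, add_comm]

lemma shift_mem_LMint {M : ℕ} {s : ℕ × ℕ × ℕ} (hs : 0 < s.1 ∧ 0 < s.2.1 ∧ 0 < s.2.2) :
    shift s ∈ LMint (M + 3) ↔ s ∈ LMint M := by
  simp only [mem_LMint, shift_apply]
  omega

lemma shift_mem_HMint {M : ℕ} {s : ℕ × ℕ × ℕ} (hs : 0 < s.1 ∧ 0 < s.2.1 ∧ 0 < s.2.2) :
    shift s ∈ HMint (M + 3) ↔ s ∈ HMint M := by
  simp only [mem_HMint, shift_apply]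
  omega

def rimPoint (M i : ℕ) : ℕ × ℕ × ℕ :=
  if i < M then (1, i + 1, M + 1 - i)
  else if i < 2 * M then (i + 1 - M, 2 * M + 1 - i, 1)
  else (3 * M + 1 - i, 1, i + 1 - 2 * M)

def rimIndex (M : ℕ) (s : ℕ × ℕ × ℕ) : ℕ :=
  if s.1 = 1 then s.2.1 - 1 else if s.2.2 = 1 then M + s.1 - 1 else 2 * M + s.2.2 - 1

lemma rimIndex_rimPoint {M i : ℕ} (hi : i < 3 * M) : rimIndex M (rimPoint M i) = i := by
  simp only [rimPoint]
  split_ifs <;> simp only [rimIndex] <;> split_ifs <;> omega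

lemma rimPoint_rimIndex {M : ℕ} {s : ℕ × ℕ × ℕ} (hsum : s.1 + s.2.1 + s.2.2 = M + 3)
    (hpos : 0 < s.1 ∧ 0 < s.2.1 ∧ 0 < s.2.2) (hrim : OnRim s) :
    rimPoint M (rimIndex M s) = s := by
  obtain ⟨a, b, c⟩ := s
  simp only [OnRim] at hsum hpos hrim
  simp only [rimIndex, rimPoint]
  split_ifs <;> simp only [Prod.mk.injEq] <;> omega

lemma card_filter_onRim_eq_card {M : ℕ} {S : Finset (ℕ × ℕ × ℕ)} {I : Finset ℕ}
    (hS : ∀ s ∈ S, s.1 + s.2.1 + s.2.2 = M + 3 ∧ 0 < s.1 ∧ 0 < s.2.1 ∧ 0 < s.2.2)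
    (hI : ∀ i ∈ I, i < 3 * M)
    (hSI : ∀ s ∈ S, OnRim s → rimIndex M s ∈ I)
    (hIS : ∀ i ∈ I, rimPoint M i ∈ S ∧ OnRim (rimPoint M i)) :
    (S.filter OnRim).card = I.card := by
  apply card_nbij' (rimIndex M) (rimPoint M)
  · intro s hs
    rw [coe_filter, Set.mem_ofPred_eq] at hs
    exact hSI s hs.1 hs.2
  · intro i hi
    rw [coe_filter, Set.mem_ofPred_eq]
    exact hIS i hi
  · intro s hs
    rw [coe_filter, Set.mem_ofPred_eq] at hs
    obtain ⟨hsum, hpos⟩ := hS s hs.1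
    exact rimPoint_rimIndex hsum hpos hs.2
  · intro i hi
    exact rimIndex_rimPoint (hI i hi)

lemma card_filter_LMint_onRim (M : ℕ) : ((LMint (M + 3)).filter OnRim).card = M := by
  suffices h : ((LMint (M + 3)).filter OnRim).card =
      (Ico (M + (M + 1) / 2) (2 * M + (M + 1) / 2)).card by
    rw [h, Nat.card_Ico]
    omega
  refine card_filter_onRim_eq_card (M := M) (fun s hs => ?_) (fun i hi => ?_)
    (fun s hs hrim => ?_) (fun i hi => ?_)
  · rw [mem_LMint] at hs
    omega
  · rw [mem_Ico] at hi
    omega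
  · rw [mem_LMint] at hs
    simp only [OnRim, rimIndex, mem_Ico] at hrim ⊢
    split_ifs <;> omega
  · rw [mem_Ico] at hi
    simp only [mem_LMint, OnRim, rimPoint]
    split_ifs <;> dsimp only <;> omega

lemma card_filter_HMint_onRim (M : ℕ) : ((HMint (M + 3)).filter OnRim).card = 2 * M := by
  rw [← card_filter_mod_three_ne_zero M M]
  refine card_filter_onRim_eq_card (M := M) (fun s hs => ?_) (fun i hi => ?_)
    (fun s hs hrim => ?_) (fun i hi => ?_)
  · rw [mem_HMint] at hs
    omega
  · rw [Finset.mem_filter, mem_range] at hi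
    omega
  · rw [mem_HMint] at hs
    simp only [OnRim, rimIndex, Finset.mem_filter, mem_range] at hrim ⊢
    split_ifs <;> omega
  · rw [Finset.mem_filter, mem_range] at hi
    simp only [mem_HMint, OnRim, rimPoint]
    split_ifs <;> dsimp only <;> omega

lemma card_LMint_add_three (M : ℕ) : (LMint (M + 3)).card = (LMint M).card + M := by
  rw [card_eq_card_add_card_filter_onRim (T := LMint M) (fun s hs => (mem_LMint.1 hs).2.2)
    (fun s hs => (mem_LMint.1 hs).2.2) (fun s hs => shift_mem_LMint hs), card_filter_LMint_onRim]

lemma card_HMint_add_three (M : ℕ) : (HMint (M + 3)).card = (HMint M).card + 2 * M := by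
  rw [card_eq_card_add_card_filter_onRim (T := HMint M) (fun s hs => (mem_HMint.1 hs).2.2)
    (fun s hs => (mem_HMint.1 hs).2.2) (fun s hs => shift_mem_HMint hs), card_filter_HMint_onRim]

theorem card_LMint_general (M : ℕ) :
    2 * (LMint M).card = (HMint M).card := by
  induction M using Nat.strong_induction_on with
  | _ M ih =>
    match M, ih with
    | 0, _ | 1, _ | 2, _ => decide
    | N + 3, ih =>
      rw [card_LMint_add_three, card_HMint_add_three, ← ih N (by omega)]
      ring

/-- `2·|L̃_M| = |H̃_M|` for the interior weight and honeycomb point sets. -/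
theorem card_LMint (M : ℕ) (hM : 3 < M) :
    2 * (LMint M).card = (HMint M).card :=
  card_LMint_general M
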